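/- Let G be a group, k a field, and θ:G×G×G→kˣ a normalized 3-cocycle, and regard the group algebra kG as a dual quasi-bialgebra with reassociator ω the linear extension of θ. Then the k-linear map S:kG→kG defined on group elements by S(g) := θ(g,g⁻¹,g)⁻¹·g⁻¹ is a preantipode for kG. -/

import Mathlib

/-! Preliminaries: dual quasi-bialgebras, preantipodes and right dual
quasi-Hopf bicomodules, formulated via linear maps over a field `k`.
All Sweedler-notation identities are encoded as identities of (composites of)
linear maps on tensor products. -/

open TensorProduct

set_option maxHeartbeats 1000000
set_option synthInstance.maxHeartbeats 400000

noncomputable section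

universe u

section Defs

variable (k : Type u) [Field k] {H : Type u} [AddCommGroup H] [Module k H]

/-- Comultiplication on a two-fold tensor product induced by `c` on each factor:
`g ⊗ h ↦ (g₁ ⊗ h₁) ⊗ (g₂ ⊗ h₂)`. -/
def comul2 (c : H →ₗ[k] H ⊗[k] H) :
    (H ⊗[k] H) →ₗ[k] (H ⊗[k] H) ⊗[k] (H ⊗[k] H) :=
  (tensorTensorTensorComm k H H H H).toLinearMap ∘ₗ map c c

/-- Comultiplication on a three-fold tensor product. -/
def comul3 (c : H →ₗ[k] H ⊗[k] H) :
    (H ⊗[k] (H ⊗[k] H)) →ₗ[k] (H ⊗[k] (H ⊗[k] H)) ⊗[k] (H ⊗[k] (H ⊗[k] H)) :=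
  (tensorTensorTensorComm k H H (H ⊗[k] H) (H ⊗[k] H)).toLinearMap ∘ₗ map c (comul2 k c)

/-- Comultiplication on a four-fold tensor product. -/
def comul4 (c : H →ₗ[k] H ⊗[k] H) :
    (H ⊗[k] (H ⊗[k] (H ⊗[k] H))) →ₗ[k]
      (H ⊗[k] (H ⊗[k] (H ⊗[k] H))) ⊗[k] (H ⊗[k] (H ⊗[k] (H ⊗[k] H))) :=
  (tensorTensorTensorComm k H H (H ⊗[k] (H ⊗[k] H)) (H ⊗[k] (H ⊗[k] H))).toLinearMap ∘ₗ
    map c (comul3 k c)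

/-- Counit on a two-fold tensor product. -/
def counit2 (e : H →ₗ[k] k) : (H ⊗[k] H) →ₗ[k] k :=
  LinearMap.mul' k k ∘ₗ map e e

/-- Counit on a three-fold tensor product. -/
def counit3 (e : H →ₗ[k] k) : (H ⊗[k] (H ⊗[k] H)) →ₗ[k] k :=
  LinearMap.mul' k k ∘ₗ map e (counit2 k e)

/-- Counit on a four-fold tensor product. -/
def counit4 (e : H →ₗ[k] k) : (H ⊗[k] (H ⊗[k] (H ⊗[k] H))) →ₗ[k] k :=
  LinearMap.mul' k k ∘ₗ map e (counit3 k e)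

/-- Convolution product of two functionals with respect to a comultiplication `D`. -/
def conv (X : Type u) [AddCommGroup X] [Module k X] (D : X →ₗ[k] X ⊗[k] X)
    (φ ψ : X →ₗ[k] k) : X →ₗ[k] k :=
  LinearMap.mul' k k ∘ₗ map φ ψ ∘ₗ D

/-- Convolution `f ⋆ φ` of an `H`-valued map with a functional. -/
def convR (X : Type u) [AddCommGroup X] [Module k X] (D : X →ₗ[k] X ⊗[k] X)
    (f : X →ₗ[k] H) (φ : X →ₗ[k] k) : X →ₗ[k] H :=
  (TensorProduct.rid k H).toLinearMap ∘ₗ map f φ ∘ₗ D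

/-- Convolution `φ ⋆ f` of a functional with an `H`-valued map. -/
def convL (X : Type u) [AddCommGroup X] [Module k X] (D : X →ₗ[k] X ⊗[k] X)
    (φ : X →ₗ[k] k) (f : X →ₗ[k] H) : X →ₗ[k] H :=
  (TensorProduct.lid k H).toLinearMap ∘ₗ map φ f ∘ₗ D

end Defs

/-- A dual quasi-bialgebra `(H, m, u, Δ, ε, ω)` over a field `k`. -/
structure DualQuasiBialgebra (k : Type u) [Field k] (H : Type u)
    [AddCommGroup H] [Module k H] : Type u where
  /-- the comultiplication `Δ` -/
  comul : H →ₗ[k] H ⊗[k] H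
  /-- the counit `ε` -/
  counit : H →ₗ[k] k
  /-- the multiplication `m` -/
  mul : (H ⊗[k] H) →ₗ[k] H
  /-- the unit element `1_H` -/
  one : H
  /-- the reassociator `ω` -/
  omega : (H ⊗[k] (H ⊗[k] H)) →ₗ[k] k
  /-- the convolution inverse `ω⁻¹` of the reassociator -/
  omegaInv : (H ⊗[k] (H ⊗[k] H)) →ₗ[k] k
  /-- `Δ` is coassociative -/
  coassoc : (TensorProduct.assoc k H H H).toLinearMap ∘ₗ comul.rTensor H ∘ₗ comul
      = comul.lTensor H ∘ₗ comul
  /-- `ε` is a left counit -/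
  counit_comul : ∀ h : H, TensorProduct.lid k H ((counit.rTensor H) (comul h)) = h
  /-- `ε` is a right counit -/
  comul_counit : ∀ h : H, TensorProduct.rid k H ((counit.lTensor H) (comul h)) = h
  /-- `m` is a morphism of coalgebras: compatibility with `Δ` -/
  comul_mul : comul ∘ₗ mul = map mul mul ∘ₗ comul2 k comul
  /-- `m` is a morphism of coalgebras: compatibility with `ε` -/
  counit_mul : counit ∘ₗ mul = counit2 k counit
  /-- `u` is a morphism of coalgebras: `Δ(1_H) = 1_H ⊗ 1_H` -/
  comul_one : comul one = one ⊗ₜ[k] one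
  /-- `u` is a morphism of coalgebras: `ε(1_H) = 1` -/
  counit_one : counit one = 1
  /-- `m` is left unitary -/
  one_mul' : ∀ h : H, mul (one ⊗ₜ[k] h) = h
  /-- `m` is right unitary -/
  mul_one' : ∀ h : H, mul (h ⊗ₜ[k] one) = h
  /-- `ω⁻¹` is a right convolution inverse of `ω` -/
  omega_inv : conv k (H ⊗[k] (H ⊗[k] H)) (comul3 k comul) omega omegaInv = counit3 k counit
  /-- `ω⁻¹` is a left convolution inverse of `ω` -/
  inv_omega : conv k (H ⊗[k] (H ⊗[k] H)) (comul3 k comul) omegaInv omega = counit3 k counit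
  /-- the 3-cocycle condition:
  `ω(g₁⊗h₁⊗k₁l₁) ω(g₂h₂⊗k₂⊗l₂) = ε(g₁)ω(h₁⊗k₁⊗l₁) ⋆ ω(g⊗h₂k₂⊗l) ⋆ ω(g⊗h⊗k)ε(l)` -/
  omega_cocycle :
    conv k (H ⊗[k] (H ⊗[k] (H ⊗[k] H))) (comul4 k comul)
      (omega ∘ₗ LinearMap.lTensor H (LinearMap.lTensor H mul))
      (omega ∘ₗ mul.rTensor (H ⊗[k] H) ∘ₗ
        (TensorProduct.assoc k H H (H ⊗[k] H)).symm.toLinearMap)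
    = conv k (H ⊗[k] (H ⊗[k] (H ⊗[k] H))) (comul4 k comul)
        (LinearMap.mul' k k ∘ₗ map counit omega)
        (conv k (H ⊗[k] (H ⊗[k] (H ⊗[k] H))) (comul4 k comul)
          (omega ∘ₗ LinearMap.lTensor H
            (mul.rTensor H ∘ₗ (TensorProduct.assoc k H H H).symm.toLinearMap))
          (LinearMap.mul' k k ∘ₗ map omega counit ∘ₗ
            (TensorProduct.assoc k H (H ⊗[k] H) H).symm.toLinearMap ∘ₗ
            LinearMap.lTensor H (TensorProduct.assoc k H H H).symm.toLinearMap))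
  /-- unitality of `ω`: `ω(1_H ⊗ h ⊗ l) = ε(h)ε(l)` -/
  omega_one_left : ∀ x : H ⊗[k] H, omega (one ⊗ₜ[k] x) = counit2 k counit x
  /-- unitality of `ω`: `ω(g ⊗ 1_H ⊗ l) = ε(g)ε(l)` -/
  omega_one_mid : ∀ g h : H, omega (g ⊗ₜ[k] (one ⊗ₜ[k] h)) = counit g * counit h
  /-- unitality of `ω`: `ω(g ⊗ h ⊗ 1_H) = ε(g)ε(h)` -/
  omega_one_right : ∀ g h : H, omega (g ⊗ₜ[k] (h ⊗ₜ[k] one)) = counit g * counit h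
  /-- quasi-associativity: `g₁(h₁k₁) ω(g₂⊗h₂⊗k₂) = ω(g₁⊗h₁⊗k₁) (g₂h₂)k₂` -/
  quasi_assoc :
    convR k (H ⊗[k] (H ⊗[k] H)) (comul3 k comul) (mul ∘ₗ mul.lTensor H) omega
    = convL k (H ⊗[k] (H ⊗[k] H)) (comul3 k comul) omega
        (mul ∘ₗ mul.rTensor H ∘ₗ (TensorProduct.assoc k H H H).symm.toLinearMap)

section Preantipode

variable (k : Type u) [Field k] {H : Type u} [AddCommGroup H] [Module k H]

/-- `S : H → H` is a preantipode for the dual quasi-bialgebra `Q`: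
(P1) `S(h₂)₁ ⊗ h₁S(h₂)₂ = S(h) ⊗ 1_H`;
(P2) `S(h₁)₁h₂ ⊗ S(h₁)₂ = 1_H ⊗ S(h)`;
(P3) `ω(h₁ ⊗ S(h₂) ⊗ h₃) = ε(h)`. -/
def IsPreantipode (Q : DualQuasiBialgebra k H) (S : H →ₗ[k] H) : Prop :=
  (∀ h : H,
      (Q.mul.lTensor H ∘ₗ (TensorProduct.leftComm k H H H).toLinearMap ∘ₗ
        (Q.comul ∘ₗ S).lTensor H ∘ₗ Q.comul) h = S h ⊗ₜ[k] Q.one) ∧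
  (∀ h : H,
      (Q.mul.rTensor H ∘ₗ (TensorProduct.assoc k H H H).symm.toLinearMap ∘ₗ
        ((TensorProduct.comm k H H).toLinearMap.lTensor H) ∘ₗ
        (TensorProduct.assoc k H H H).toLinearMap ∘ₗ
        (Q.comul ∘ₗ S).rTensor H ∘ₗ Q.comul) h = Q.one ⊗ₜ[k] S h) ∧
  (∀ h : H,
      (Q.omega ∘ₗ (S.rTensor H).lTensor H ∘ₗ Q.comul.lTensor H ∘ₗ Q.comul) h = Q.counit h)

end Preantipode

/-- A right dual quasi-Hopf `H`-bicomodule over the dual quasi-bialgebra `Q`. -/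
structure Bicomodule (k : Type u) [Field k] (H : Type u) [AddCommGroup H] [Module k H]
    (Q : DualQuasiBialgebra k H) (M : Type u) [AddCommGroup M] [Module k M] : Type u where
  /-- the left `H`-coaction `ρˡ : m ↦ m₋₁ ⊗ m₀` -/
  coactL : M →ₗ[k] H ⊗[k] M
  /-- the right `H`-coaction `ρʳ : m ↦ m₀ ⊗ m₁` -/
  coactR : M →ₗ[k] M ⊗[k] H
  /-- the right `H`-action `m ⊗ h ↦ mh` -/
  act : (M ⊗[k] H) →ₗ[k] M
  /-- coassociativity of the left coaction -/
  coassocL : (TensorProduct.assoc k H H M).toLinearMap ∘ₗ Q.comul.rTensor M ∘ₗ coactL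
      = coactL.lTensor H ∘ₗ coactL
  /-- counitality of the left coaction -/
  counitL : ∀ m : M, TensorProduct.lid k M ((Q.counit.rTensor M) (coactL m)) = m
  /-- coassociativity of the right coaction -/
  coassocR : (TensorProduct.assoc k M H H).toLinearMap ∘ₗ coactR.rTensor H ∘ₗ coactR
      = Q.comul.lTensor M ∘ₗ coactR
  /-- counitality of the right coaction -/
  counitR : ∀ m : M, TensorProduct.rid k M ((Q.counit.lTensor M) (coactR m)) = m
  /-- the two coactions commute: `M` is an `H`-bicomodule -/
  bicom : coactR.lTensor H ∘ₗ coactL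
      = (TensorProduct.assoc k H M H).toLinearMap ∘ₗ coactL.rTensor H ∘ₗ coactR
  /-- unitality of the action: `m·1_H = m` -/
  act_one : ∀ m : M, act (m ⊗ₜ[k] Q.one) = m
  /-- left colinearity of the action: `(mh)₋₁ ⊗ (mh)₀ = m₋₁h₁ ⊗ m₀h₂` -/
  coactL_act : coactL ∘ₗ act
      = map Q.mul act ∘ₗ (tensorTensorTensorComm k H M H H).toLinearMap ∘ₗ map coactL Q.comul
  /-- right colinearity of the action: `(mh)₀ ⊗ (mh)₁ = m₀h₁ ⊗ m₁h₂` -/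
  coactR_act : coactR ∘ₗ act
      = map act Q.mul ∘ₗ (tensorTensorTensorComm k M H H H).toLinearMap ∘ₗ map coactR Q.comul
  /-- quasi-associativity of the action:
  `(mh)l = ω⁻¹(m₋₁⊗h₁⊗l₁) m₀(h₂l₂) ω(m₁⊗h₃⊗l₃)` -/
  act_act : act ∘ₗ act.rTensor H
      = (TensorProduct.rid k M).toLinearMap ∘ₗ
        map (act ∘ₗ Q.mul.lTensor M) Q.omega ∘ₗ
        ((tensorTensorTensorComm k M H (H ⊗[k] H) (H ⊗[k] H)).toLinearMap ∘ₗ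
          map coactR (comul2 k Q.comul)) ∘ₗ
        (TensorProduct.lid k (M ⊗[k] (H ⊗[k] H))).toLinearMap ∘ₗ
        map Q.omegaInv (LinearMap.id : M ⊗[k] (H ⊗[k] H) →ₗ[k] M ⊗[k] (H ⊗[k] H)) ∘ₗ
        ((tensorTensorTensorComm k H M (H ⊗[k] H) (H ⊗[k] H)).toLinearMap ∘ₗ
          map coactL (comul2 k Q.comul)) ∘ₗ
        (TensorProduct.assoc k M H H).toLinearMap

section Coinv

variable (k : Type u) [Field k] {H : Type u} [AddCommGroup H] [Module k H]
  {M : Type u} [AddCommGroup M] [Module k M]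

/-- The coinvariants `{x ∈ M ∣ ρʳ(x) = x ⊗ 1_H}` of a right coaction `r`. -/
def coinv (oneH : H) (r : M →ₗ[k] M ⊗[k] H) : Submodule k M :=
  LinearMap.ker (r - (TensorProduct.mk k M H).flip oneH)

variable {Q : DualQuasiBialgebra k H}

/-- The canonical map `ε_M : M^{coH} ⊗ H → M`, `m ⊗ h ↦ mh`. -/
def epsM (B : Bicomodule k H Q M) :
    ((coinv k Q.one B.coactR) ⊗[k] H) →ₗ[k] M :=
  B.act ∘ₗ map (coinv k Q.one B.coactR).subtype LinearMap.id

end Coinv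

section TauMaps

variable (k : Type u) [Field k] {H : Type u} [AddCommGroup H] [Module k H]
  {M : Type u} [AddCommGroup M] [Module k M] {Q : DualQuasiBialgebra k H}

/-- The swap `(b ⊗ c) ⊗ d ↦ (b ⊗ d) ⊗ c`. -/
def sigmaSwap : ((H ⊗[k] H) ⊗[k] H) →ₗ[k] ((H ⊗[k] H) ⊗[k] H) :=
  (TensorProduct.assoc k H H H).symm.toLinearMap ∘ₗ
    (TensorProduct.comm k H H).toLinearMap.lTensor H ∘ₗ
    (TensorProduct.assoc k H H H).toLinearMap

/-- The map `τ : M → M`, `τ(m) = ω(m₋₁ ⊗ S(m₁)₁ ⊗ m₂) · m₀ S(m₁)₂`,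
associated to a preantipode-candidate `S`. -/
def tauMap (B : Bicomodule k H Q M) (S : H →ₗ[k] H) : M →ₗ[k] M :=
  (TensorProduct.lid k M).toLinearMap ∘ₗ
    map Q.omega B.act ∘ₗ
    (TensorProduct.assoc k H (H ⊗[k] H) (M ⊗[k] H)).symm.toLinearMap ∘ₗ
    ((TensorProduct.leftComm k M (H ⊗[k] H) H).toLinearMap ∘ₗ
      (sigmaSwap k).lTensor M).lTensor H ∘ₗ
    (((Q.comul ∘ₗ S).rTensor H).lTensor M).lTensor H ∘ₗ
    (Q.comul.lTensor M).lTensor H ∘ₗ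
    B.coactR.lTensor H ∘ₗ
    B.coactL

/-- For a linear map `t : M → M`, the map
`m ⊗ h ↦ ω⁻¹(t(m₀)₋₁ ⊗ m₁ ⊗ h) · t(m₀)₀`. -/
def rhsTauAct (B : Bicomodule k H Q M) (t : M →ₗ[k] M) : (M ⊗[k] H) →ₗ[k] M :=
  (TensorProduct.lid k M).toLinearMap ∘ₗ
    map Q.omegaInv (LinearMap.id : M →ₗ[k] M) ∘ₗ
    (TensorProduct.assoc k H (H ⊗[k] H) M).symm.toLinearMap ∘ₗ
    (TensorProduct.comm k M (H ⊗[k] H)).toLinearMap.lTensor H ∘ₗ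
    (TensorProduct.assoc k H M (H ⊗[k] H)).toLinearMap ∘ₗ
    (TensorProduct.assoc k (H ⊗[k] M) H H).toLinearMap ∘ₗ
    ((B.coactL ∘ₗ t).rTensor H).rTensor H ∘ₗ
    B.coactR.rTensor H

/-- For a linear map `t : M → M`, the map `m ↦ t(m₀)₋₁ m₁ ⊗ t(m₀)₀`. -/
def rhsColinear (B : Bicomodule k H Q M) (t : M →ₗ[k] M) : M →ₗ[k] (H ⊗[k] M) :=
  Q.mul.rTensor M ∘ₗ
    (TensorProduct.assoc k H H M).symm.toLinearMap ∘ₗ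
    (TensorProduct.comm k M H).toLinearMap.lTensor H ∘ₗ
    (TensorProduct.assoc k H M H).toLinearMap ∘ₗ
    (B.coactL ∘ₗ t).rTensor H ∘ₗ
    B.coactR

end TauMaps

section Hat

variable (k : Type u) [Field k] {H : Type u} [AddCommGroup H] [Module k H]

/-- The right `H`-coaction on `H ⊗̂ H`: `h ⊗ l ↦ (h₁ ⊗ l₁) ⊗ h₂l₂`. -/
def hatCoactR (Q : DualQuasiBialgebra k H) : (H ⊗[k] H) →ₗ[k] (H ⊗[k] H) ⊗[k] H :=
  Q.mul.lTensor (H ⊗[k] H) ∘ₗ comul2 k Q.comul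

/-- The left `H`-coaction on `H ⊗̂ H`: `h ⊗ l ↦ l₁ ⊗ (h ⊗ l₂)`. -/
def hatCoactL (Q : DualQuasiBialgebra k H) : (H ⊗[k] H) →ₗ[k] H ⊗[k] (H ⊗[k] H) :=
  (TensorProduct.leftComm k H H H).toLinearMap ∘ₗ Q.comul.lTensor H

/-- The right `H`-action on `H ⊗̂ H`:
`(x ⊗ y) · h = (x₁ ⊗ y₁h₁) · ω(x₂ ⊗ y₂ ⊗ h₂)`. -/
def hatAct (Q : DualQuasiBialgebra k H) : ((H ⊗[k] H) ⊗[k] H) →ₗ[k] (H ⊗[k] H) :=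
  (TensorProduct.rid k (H ⊗[k] H)).toLinearMap ∘ₗ
    map (Q.mul.lTensor H ∘ₗ (TensorProduct.assoc k H H H).toLinearMap)
      (Q.omega ∘ₗ (TensorProduct.assoc k H H H).toLinearMap) ∘ₗ
    (tensorTensorTensorComm k (H ⊗[k] H) (H ⊗[k] H) H H).toLinearMap ∘ₗ
    map (comul2 k Q.comul) Q.comul

/-- The map `ε̂_H : (H ⊗̂ H)^{coH} ⊗ H → H ⊗ H`,
`(x ⊗ y) ⊗ h ↦ x₁ ⊗ y₁h₁ · ω(x₂ ⊗ y₂ ⊗ h₂)`. -/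
def epsHat (Q : DualQuasiBialgebra k H) :
    ((coinv k Q.one (hatCoactR k Q)) ⊗[k] H) →ₗ[k] H ⊗[k] H :=
  hatAct k Q ∘ₗ map (coinv k Q.one (hatCoactR k Q)).subtype LinearMap.id

end Hat

section GroupAlgebra

variable (k : Type u) [Field k] (G : Type u) [Group G]

/-- The group-like comultiplication on the group algebra `kG`: `g ↦ g ⊗ g`. -/
def comulG : MonoidAlgebra k G →ₗ[k] MonoidAlgebra k G ⊗[k] MonoidAlgebra k G :=
  Finsupp.lift (MonoidAlgebra k G ⊗[k] MonoidAlgebra k G) k G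
    (fun g => MonoidAlgebra.of k G g ⊗ₜ[k] MonoidAlgebra.of k G g) ∘ₗ (MonoidAlgebra.coeffLinearEquiv k).toLinearMap

/-- The counit on the group algebra `kG`: `g ↦ 1`. -/
def counitG : MonoidAlgebra k G →ₗ[k] k :=
  Finsupp.lift k k G (fun _ => (1 : k)) ∘ₗ (MonoidAlgebra.coeffLinearEquiv k).toLinearMap

/-- The linear extension of a map `θ : G × G × G → kˣ` to
`kG ⊗ kG ⊗ kG → k`. -/
def omegaTheta (θ : G → G → G → kˣ) :
    (MonoidAlgebra k G ⊗[k] (MonoidAlgebra k G ⊗[k] MonoidAlgebra k G)) →ₗ[k] k :=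
  TensorProduct.lift
    ((TensorProduct.lift.equiv (RingHom.id k) (MonoidAlgebra k G) (MonoidAlgebra k G) k).toLinearMap ∘ₗ
      (Finsupp.lift (MonoidAlgebra k G →ₗ[k] MonoidAlgebra k G →ₗ[k] k) k G
        (fun g => Finsupp.lift (MonoidAlgebra k G →ₗ[k] k) k G
          (fun h => Finsupp.lift k k G (fun l => ((θ g h l : kˣ) : k)) ∘ₗ (MonoidAlgebra.coeffLinearEquiv k).toLinearMap) ∘ₗ (MonoidAlgebra.coeffLinearEquiv k).toLinearMap) ∘ₗ (MonoidAlgebra.coeffLinearEquiv k).toLinearMap))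

/-- The candidate preantipode on `kG`: `S(g) = θ(g,g⁻¹,g)⁻¹ · g⁻¹`. -/
def preantipodeG (θ : G → G → G → kˣ) : MonoidAlgebra k G →ₗ[k] MonoidAlgebra k G :=
  Finsupp.lift (MonoidAlgebra k G) k G
    (fun g => (((θ g g⁻¹ g)⁻¹ : kˣ) : k) • MonoidAlgebra.of k G g⁻¹) ∘ₗ (MonoidAlgebra.coeffLinearEquiv k).toLinearMap

end GroupAlgebra

/-! Each group element `g` is group-like and `S g` is a scalar multiple of the group-like
element `g⁻¹`, so on the basis `G` conditions (P1) and (P2) reduce to `g g⁻¹ = g⁻¹ g = 1`, and (P3)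
to `θ(g,g⁻¹,g)⁻¹ θ(g,g⁻¹,g) = 1`. -/

theorem MonoidAlgebra.linearMap_apply_eq_of_forall_of {R G M : Type*} [Semiring R] [Monoid G]
    [AddCommMonoid M] [Module R M] (f f' : MonoidAlgebra R G →ₗ[R] M)
    (h : ∀ g, f (MonoidAlgebra.of R G g) = f' (MonoidAlgebra.of R G g)) (a : MonoidAlgebra R G) :
    f a = f' a := by
  congr 1
  ext g
  exact h g

section GroupAlgebra

variable {k : Type u} [Field k] {G : Type u} [Group G]

open MonoidAlgebra

theorem comulG_of (g : G) : comulG k G (of k G g) = of k G g ⊗ₜ[k] of k G g := by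
  simp [comulG]

theorem counitG_of (g : G) : counitG k G (of k G g) = 1 := by
  simp [counitG]

theorem preantipodeG_of (θ : G → G → G → kˣ) (g : G) :
    preantipodeG k G θ (of k G g) = (((θ g g⁻¹ g)⁻¹ : kˣ) : k) • of k G g⁻¹ := by
  simp [preantipodeG]

theorem omegaTheta_of (θ : G → G → G → kˣ) (g h l : G) :
    omegaTheta k G θ (of k G g ⊗ₜ[k] (of k G h ⊗ₜ[k] of k G l)) = θ g h l := by
  simp [omegaTheta]

end GroupAlgebra

theorem groupAlgebra_preantipode_general
    (k : Type u) [Field k] (G : Type u) [Group G] (θ : G → G → G → kˣ) :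
    ∀ Q : DualQuasiBialgebra k (MonoidAlgebra k G),
      Q.comul = comulG k G →
      Q.counit = counitG k G →
      Q.mul = LinearMap.mul' k (MonoidAlgebra k G) →
      Q.one = 1 →
      Q.omega = omegaTheta k G θ →
      IsPreantipode k Q (preantipodeG k G θ) := by
  intro Q hcomul hcounit hmul hone homega
  rw [IsPreantipode, hcomul, hcounit, hmul, hone, homega]
  refine ⟨MonoidAlgebra.linearMap_apply_eq_of_forall_of _
      ((mk k _ _).flip 1 ∘ₗ preantipodeG k G θ) fun g => ?P1,
    MonoidAlgebra.linearMap_apply_eq_of_forall_of _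
      (mk k (MonoidAlgebra k G) _ 1 ∘ₗ preantipodeG k G θ) fun g => ?P2,
    MonoidAlgebra.linearMap_apply_eq_of_forall_of _ _ fun g => ?P3⟩ <;>
    simp only [LinearMap.comp_apply, comulG_of, preantipodeG_of, counitG_of,
      LinearMap.lTensor_tmul, LinearMap.rTensor_tmul, map_smul, LinearEquiv.coe_coe,
      LinearMap.flip_apply, mk_apply]
  case P1 =>
    simp only [leftComm_tmul, smul_tmul', LinearMap.lTensor_tmul, LinearMap.mul'_apply,
      ← map_mul, mul_inv_cancel, map_one]
  case P2 =>
    simp only [assoc_tmul, LinearMap.lTensor_tmul, LinearEquiv.coe_coe, comm_tmul,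
      assoc_symm_tmul, LinearMap.rTensor_tmul, smul_tmul', LinearMap.mul'_apply, smul_mul_assoc,
      ← map_mul, inv_mul_cancel, map_one]
  case P3 =>
    rw [← smul_tmul', tmul_smul, map_smul, omegaTheta_of, smul_eq_mul, Units.inv_mul]

/-- For a group `G` and a normalized 3-cocycle `θ : G×G×G → kˣ`, the
linear map `S : kG → kG` with `S(g) = θ(g,g⁻¹,g)⁻¹ · g⁻¹` is a preantipode for the dual
quasi-bialgebra `kG` with reassociator the linear extension of `θ`. -/
theorem groupAlgebra_preantipode
    (k : Type u) [Field k] (G : Type u) [Group G] (θ : G → G → G → kˣ)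
    (hnorm : ∀ g h : G, θ g 1 h = 1)
    (hcocycle : ∀ g h p q : G,
      θ h p q * θ g (h * p) q * θ g h p = θ g h (p * q) * θ (g * h) p q) :
    ∀ Q : DualQuasiBialgebra k (MonoidAlgebra k G),
      Q.comul = comulG k G →
      Q.counit = counitG k G →
      Q.mul = LinearMap.mul' k (MonoidAlgebra k G) →
      Q.one = 1 →
      Q.omega = omegaTheta k G θ →
      IsPreantipode k Q (preantipodeG k G θ) :=
  groupAlgebra_preantipode_general k G θ

end
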